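/- arXiv:1601.03660 — 3 statements merged into one kernel-verified Lean document; each statement's English description precedes it below -/
import Mathlib

section
/- Information-density Chernoff bound: let (U_t, V_t), t = 1,…,n, be independent pairs with (U_t,V_t) ∼ Q_{U,V|S=s_t} for a state sequence s ∈ S^n over a finite set S. Then for any η > 1 and ε ≥ 0, the probability that Σ_t i_t(U_t,V_t) ≥ n(I + ε) is at most 2^{−n(η−1)(I + ε − max_{s∈S} d_η(Q_{U,V|S=s}, Q_{U|S=s}Q_{V|S=s}))}, where i_t(u,v) = log(Q_{V|U=u,S=s_t}(v)/Q_{V|S=s_t}(v)), I = I(U;V|S) is computed under the empirical distribution of s, and d_η is the Rényi divergence of order η. -/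
open scoped Classical

private lemma two_rpow_sum {ι : Type*} (s : Finset ι) (f : ι → ℝ) :
    (2:ℝ) ^ (∑ t ∈ s, f t) = ∏ t ∈ s, (2:ℝ) ^ (f t) := by
  induction s using Finset.cons_induction with
  | empty => simp
  | cons a s ha ih => rw [Finset.sum_cons, Finset.prod_cons, Real.rpow_add two_pos, ih]

private lemma chernoff_aux {ι α : Type*} [Fintype ι] [DecidableEq ι] [Fintype α]
    (p : ι → α → ℝ) (hp : ∀ t a, 0 ≤ p t a) (i : ι → α → ℝ) (c : ℝ)
    (b : ι → ℝ) (η : ℝ) (hη : 1 < η)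
    (hb : ∀ t, ∑ a, p t a * (2:ℝ) ^ ((η - 1) * i t a) ≤ (2:ℝ) ^ (b t)) :
    ∑ x ∈ Finset.univ.filter (fun x : ι → α => c ≤ ∑ t, i t (x t)), ∏ t, p t (x t)
      ≤ (2:ℝ) ^ (-(η - 1) * c + ∑ t, b t) := by
  have hη0 : 0 < η - 1 := by linarith
  calc ∑ x ∈ Finset.univ.filter (fun x : ι → α => c ≤ ∑ t, i t (x t)), ∏ t, p t (x t)
      ≤ ∑ x ∈ Finset.univ.filter (fun x : ι → α => c ≤ ∑ t, i t (x t)),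
          (∏ t, p t (x t)) * (2:ℝ) ^ ((η - 1) * (∑ t, i t (x t) - c)) := by
        apply Finset.sum_le_sum
        intro x hx
        have hc := (Finset.mem_filter.mp hx).2
        have he : (0:ℝ) ≤ (η - 1) * (∑ t, i t (x t) - c) :=
          mul_nonneg hη0.le (by linarith)
        have h1 : (1:ℝ) ≤ (2:ℝ) ^ ((η - 1) * (∑ t, i t (x t) - c)) := by
          have := Real.rpow_le_rpow_of_exponent_le (by norm_num : (1:ℝ) ≤ 2) he
          simpa using this
        nth_rewrite 1 [← mul_one (∏ t, p t (x t))]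
        exact mul_le_mul_of_nonneg_left h1 (Finset.prod_nonneg fun t _ => hp t (x t))
    _ ≤ ∑ x : ι → α, (∏ t, p t (x t)) * (2:ℝ) ^ ((η - 1) * (∑ t, i t (x t) - c)) := by
        apply Finset.sum_le_sum_of_subset_of_nonneg (Finset.filter_subset _ _)
        intro x _ _
        exact mul_nonneg (Finset.prod_nonneg fun t _ => hp t (x t))
          (Real.rpow_nonneg (by norm_num) _)
    _ = (2:ℝ) ^ (-(η - 1) * c) *
        ∑ x : ι → α, ∏ t, (p t (x t) * (2:ℝ) ^ ((η - 1) * i t (x t))) := by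
        rw [Finset.mul_sum]
        refine Finset.sum_congr rfl fun x _ => ?_
        have hsplit : (η - 1) * (∑ t, i t (x t) - c)
            = (-(η - 1) * c) + ∑ t, (η - 1) * i t (x t) := by
          rw [← Finset.mul_sum]; ring
        rw [hsplit, Real.rpow_add two_pos, Finset.prod_mul_distrib, ← two_rpow_sum]
        ring
    _ = (2:ℝ) ^ (-(η - 1) * c) * ∏ t, ∑ a, p t a * (2:ℝ) ^ ((η - 1) * i t a) := by
        rw [Finset.prod_univ_sum, Fintype.piFinset_univ]
    _ ≤ (2:ℝ) ^ (-(η - 1) * c) * ∏ t, (2:ℝ) ^ (b t) := by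
        refine mul_le_mul_of_nonneg_left ?_ (Real.rpow_nonneg (by norm_num) _)
        refine Finset.prod_le_prod (fun t _ => ?_) (fun t _ => hb t)
        exact Finset.sum_nonneg fun a _ =>
          mul_nonneg (hp t a) (Real.rpow_nonneg (by norm_num) _)
    _ = (2:ℝ) ^ (-(η - 1) * c + ∑ t, b t) := by
        rw [Real.rpow_add two_pos, two_rpow_sum]

/-- Information-density Chernoff bound: for independent pairs `(U_t,V_t) ∼ Q_{U,V|S=s_t}`,
the probability that the sum of information densities exceeds `n(I(U;V|S)+ε)` is at most
`2^{-n(η-1)(I+ε - max_s d_η(Q_{U,V|S=s}, Q_{U|S=s}Q_{V|S=s}))}` for every `η > 1`, `ε ≥ 0`. -/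
theorem information_density_chernoff (S U V : Type) [Fintype S] [Fintype U] [Fintype V]
    [Nonempty S] (n : ℕ) (hn : 0 < n) (Q : S → U → V → ℝ)
    (hQ0 : ∀ s u v, 0 ≤ Q s u v) (hQ1 : ∀ s, ∑ u, ∑ v, Q s u v = 1)
    (s : Fin n → S) (η ε : ℝ) (hη : 1 < η) (hε : 0 ≤ ε) :
    ∑ uv ∈ Finset.univ.filter (fun uv : Fin n → U × V =>
        (n : ℝ) * ((∑ s' : S, (((Finset.univ.filter fun i => s i = s').card : ℝ) / n) *
            ∑ u, ∑ v, Q s' u v *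
              Real.logb 2 (Q s' u v / ((∑ v', Q s' u v') * (∑ u', Q s' u' v)))) + ε)
          ≤ ∑ t, Real.logb 2 (Q (s t) (uv t).1 (uv t).2 /
              ((∑ v', Q (s t) (uv t).1 v') * (∑ u', Q (s t) u' (uv t).2)))),
      ∏ t, Q (s t) (uv t).1 (uv t).2
    ≤ (2 : ℝ) ^ (-(n : ℝ) * (η - 1) *
        ((∑ s' : S, (((Finset.univ.filter fun i => s i = s').card : ℝ) / n) *
            ∑ u, ∑ v, Q s' u v *
              Real.logb 2 (Q s' u v / ((∑ v', Q s' u v') * (∑ u', Q s' u' v)))) + ε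
          - ⨆ s' : S, (1 / (η - 1)) * Real.logb 2
              (∑ u, ∑ v, Q s' u v ^ η *
                ((∑ v', Q s' u v') * (∑ u', Q s' u' v)) ^ (1 - η)))) := by
  have hη0 : 0 < η - 1 := by linarith
  set I : ℝ := (∑ s' : S, (((Finset.univ.filter fun i => s i = s').card : ℝ) / n) *
      ∑ u, ∑ v, Q s' u v *
        Real.logb 2 (Q s' u v / ((∑ v', Q s' u v') * (∑ u', Q s' u' v)))) with hI
  set D : ℝ := ⨆ s' : S, (1 / (η - 1)) * Real.logb 2
      (∑ u, ∑ v, Q s' u v ^ η *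
        ((∑ v', Q s' u v') * (∑ u', Q s' u' v)) ^ (1 - η)) with hD
  -- Key per-state bound on the moment generating factor
  have key : ∀ s' : S, ∑ a : U × V, Q s' a.1 a.2 *
      (2:ℝ) ^ ((η - 1) * Real.logb 2
        (Q s' a.1 a.2 / ((∑ v', Q s' a.1 v') * (∑ u', Q s' u' a.2))))
      ≤ (2:ℝ) ^ ((η - 1) * D) := by
    intro s'
    have hterm : ∀ u v, Q s' u v * (2:ℝ) ^ ((η - 1) * Real.logb 2
          (Q s' u v / ((∑ v', Q s' u v') * (∑ u', Q s' u' v))))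
        = Q s' u v ^ η * ((∑ v', Q s' u v') * (∑ u', Q s' u' v)) ^ (1 - η) := by
      intro u v
      rcases eq_or_lt_of_le (hQ0 s' u v) with h0 | hpos
      · rw [← h0]
        simp [Real.zero_rpow (by linarith : (0:ℝ) < η).ne']
      · have hQUpos : 0 < ∑ v', Q s' u v' :=
          lt_of_lt_of_le hpos (Finset.single_le_sum (fun v' _ => hQ0 s' u v') (Finset.mem_univ v))
        have hQVpos : 0 < ∑ u', Q s' u' v :=
          lt_of_lt_of_le hpos (Finset.single_le_sum (fun u' _ => hQ0 s' u' v) (Finset.mem_univ u))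
        have hApos : 0 < (∑ v', Q s' u v') * (∑ u', Q s' u' v) := mul_pos hQUpos hQVpos
        rw [mul_comm (η - 1), Real.rpow_mul (by norm_num : (0:ℝ) ≤ 2),
          Real.rpow_logb two_pos (by norm_num) (div_pos hpos hApos),
          Real.div_rpow hpos.le hApos.le]
        have e1 : Q s' u v ^ η = Q s' u v ^ (1:ℝ) * Q s' u v ^ (η - 1) := by
          rw [← Real.rpow_add hpos]; norm_num
        have e2 : ((∑ v', Q s' u v') * (∑ u', Q s' u' v)) ^ (1 - η)
            = (((∑ v', Q s' u v') * (∑ u', Q s' u' v)) ^ (η - 1))⁻¹ := by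
          rw [← Real.rpow_neg hApos.le]; ring_nf
        rw [e1, e2, Real.rpow_one]
        ring
    have hnonneg : ∀ u v, (0:ℝ) ≤ Q s' u v ^ η *
        ((∑ v', Q s' u v') * (∑ u', Q s' u' v)) ^ (1 - η) := fun u v =>
      mul_nonneg (Real.rpow_nonneg (hQ0 s' u v) _)
        (Real.rpow_nonneg (mul_nonneg
          (Finset.sum_nonneg fun v' _ => hQ0 s' u v')
          (Finset.sum_nonneg fun u' _ => hQ0 s' u' v)) _)
    have hSpos : 0 < ∑ u, ∑ v, Q s' u v ^ η *
        ((∑ v', Q s' u v') * (∑ u', Q s' u' v)) ^ (1 - η) := by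
      obtain ⟨u, v, hpos⟩ : ∃ u v, 0 < Q s' u v := by
        by_contra h
        push_neg at h
        have hz : ∑ u, ∑ v, Q s' u v = 0 :=
          Finset.sum_eq_zero fun u _ => Finset.sum_eq_zero fun v _ =>
            le_antisymm (h u v) (hQ0 s' u v)
        rw [hQ1 s'] at hz; norm_num at hz
      have hQUpos : 0 < ∑ v', Q s' u v' :=
        lt_of_lt_of_le hpos (Finset.single_le_sum (fun v' _ => hQ0 s' u v') (Finset.mem_univ v))
      have hQVpos : 0 < ∑ u', Q s' u' v :=
        lt_of_lt_of_le hpos (Finset.single_le_sum (fun u' _ => hQ0 s' u' v) (Finset.mem_univ u))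
      have htp : 0 < Q s' u v ^ η *
          ((∑ v', Q s' u v') * (∑ u', Q s' u' v)) ^ (1 - η) :=
        mul_pos (Real.rpow_pos_of_pos hpos _)
          (Real.rpow_pos_of_pos (mul_pos hQUpos hQVpos) _)
      calc (0:ℝ) < Q s' u v ^ η * ((∑ v', Q s' u v') * (∑ u', Q s' u' v)) ^ (1 - η) := htp
        _ ≤ ∑ v, Q s' u v ^ η * ((∑ v', Q s' u v') * (∑ u', Q s' u' v)) ^ (1 - η) :=
            Finset.single_le_sum (fun v' _ => hnonneg u v') (Finset.mem_univ v)
        _ ≤ ∑ u, ∑ v, Q s' u v ^ η * ((∑ v', Q s' u v') * (∑ u', Q s' u' v)) ^ (1 - η) :=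
            Finset.single_le_sum
              (fun u' _ => Finset.sum_nonneg fun v' _ => hnonneg u' v') (Finset.mem_univ u)
    have hle : (1 / (η - 1)) * Real.logb 2 (∑ u, ∑ v, Q s' u v ^ η *
        ((∑ v', Q s' u v') * (∑ u', Q s' u' v)) ^ (1 - η)) ≤ D := by
      rw [hD]
      have hbdd : BddAbove (Set.range (fun s'' : S => (1 / (η - 1)) * Real.logb 2
          (∑ u, ∑ v, Q s'' u v ^ η *
            ((∑ v', Q s'' u v') * (∑ u', Q s'' u' v)) ^ (1 - η)))) :=
        (Set.finite_range _).bddAbove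
      exact le_ciSup hbdd s'
    have hexp : (η - 1) * ((1 / (η - 1)) * Real.logb 2 (∑ u, ∑ v, Q s' u v ^ η *
        ((∑ v', Q s' u v') * (∑ u', Q s' u' v)) ^ (1 - η)))
        = Real.logb 2 (∑ u, ∑ v, Q s' u v ^ η *
          ((∑ v', Q s' u v') * (∑ u', Q s' u' v)) ^ (1 - η)) := by
      have h := hη0.ne'
      field_simp
    calc ∑ a : U × V, Q s' a.1 a.2 *
          (2:ℝ) ^ ((η - 1) * Real.logb 2
            (Q s' a.1 a.2 / ((∑ v', Q s' a.1 v') * (∑ u', Q s' u' a.2))))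
        = ∑ u, ∑ v, Q s' u v ^ η *
            ((∑ v', Q s' u v') * (∑ u', Q s' u' v)) ^ (1 - η) := by
          rw [Fintype.sum_prod_type]
          exact Finset.sum_congr rfl fun u _ => Finset.sum_congr rfl fun v _ => hterm u v
      _ = (2:ℝ) ^ Real.logb 2 (∑ u, ∑ v, Q s' u v ^ η *
            ((∑ v', Q s' u v') * (∑ u', Q s' u' v)) ^ (1 - η)) :=
          (Real.rpow_logb two_pos (by norm_num) hSpos).symm
      _ = (2:ℝ) ^ ((η - 1) * ((1 / (η - 1)) * Real.logb 2 (∑ u, ∑ v, Q s' u v ^ η *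
            ((∑ v', Q s' u v') * (∑ u', Q s' u' v)) ^ (1 - η)))) := by rw [hexp]
      _ ≤ (2:ℝ) ^ ((η - 1) * D) :=
          Real.rpow_le_rpow_of_exponent_le (by norm_num)
            (mul_le_mul_of_nonneg_left hle hη0.le)
  have main := chernoff_aux (fun t (a : U × V) => Q (s t) a.1 a.2)
    (fun t a => hQ0 _ _ _)
    (fun t (a : U × V) => Real.logb 2
      (Q (s t) a.1 a.2 / ((∑ v', Q (s t) a.1 v') * (∑ u', Q (s t) u' a.2))))
    ((n : ℝ) * (I + ε)) (fun _ => (η - 1) * D) η hη (fun t => key (s t))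
  refine main.trans (le_of_eq ?_)
  rw [Finset.sum_const, Finset.card_univ, Fintype.card_fin, nsmul_eq_mul]
  congr 1
  ring
end

section
/- Random-coding decoding error bound: let d : X^n × Y^n → ℝ≥0 satisfy E_{Q_X^n} d(X, y) ≤ 1 for all y ∈ Y^n, and let codewords {X(m,w)} for (m,w) ∈ M_n × W_n be i.i.d. ∼ Q_X^n, decoded by the maximum-d rule. Then for every channel W_n : X^n → P(Y^n), every η > 0, and every (m,w), the expected probability of decoding error for message (m,w) is at most P_{Q_X^n W_n}(d(X,Y) < |M_n||W_n|/η) + η. -/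
/-!
Put `T = |I| / η`, where `I = M × W`. Decoding of `i₀` can fail at output `y` only if the true
codeword scores `d(C i₀, y) < T`, or some competitor `C p`, `p ≠ i₀`, scores `d(C p, y) ≥ T`.
The first event has exactly the probability on the right-hand side. In the second, `C p` is
independent of the pair `(C i₀, Y)`, so Markov's inequality together with `E d(X, y) ≤ 1` bounds
its probability by `1 / T`; the union bound over fewer than `|I|` competitors gives `|I| / T = η`.
-/

open scoped Classical
open Finset

namespace RandomCoding

section UnionBound

variable {β ι : Type*}

lemma sum_union_le_of_nonneg {f : β → ℝ} (hf : ∀ y, 0 ≤ f y) (s t : Finset β) :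
    ∑ y ∈ s ∪ t, f y ≤ ∑ y ∈ s, f y + ∑ y ∈ t, f y := by
  rw [← sum_union_inter]
  exact le_add_of_nonneg_right (sum_nonneg fun y _ => hf y)

lemma sum_biUnion_le_of_nonneg {f : β → ℝ} (hf : ∀ y, 0 ≤ f y) (s : Finset ι)
    (t : ι → Finset β) : ∑ y ∈ s.biUnion t, f y ≤ ∑ i ∈ s, ∑ y ∈ t i, f y := by
  rw [← sup_eq_biUnion]
  exact (apply_sup_le_sum (f := fun t => ∑ y ∈ t, f y) sum_empty fun {_ _} =>
    sum_union_le_of_nonneg hf _ _) s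

end UnionBound

variable {α β I : Type*} [Fintype I]

/-- The mass `μ^{⊗I}(C)` of the family `C` under the i.i.d. law with marginal `μ`. -/
def iidWeight (μ : α → ℝ) (C : I → α) : ℝ := ∏ j, μ (C j)

lemma iidWeight_nonneg {μ : α → ℝ} (hμ : ∀ x, 0 ≤ μ x) (C : I → α) : 0 ≤ iidWeight μ C :=
  prod_nonneg fun j _ => hμ (C j)

variable [Fintype α] [DecidableEq I]

lemma sum_iidWeight_mul_prod {μ : α → ℝ} (hμ : ∑ x, μ x = 1) (s : Finset I)
    (A : I → α → ℝ) :
    ∑ C : I → α, iidWeight μ C * ∏ j ∈ s, A j (C j) = ∏ j ∈ s, ∑ x, μ x * A j x := by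
  calc ∑ C : I → α, iidWeight μ C * ∏ j ∈ s, A j (C j)
      = ∑ C : I → α, ∏ j, μ (C j) * (if j ∈ s then A j (C j) else 1) := by
        simp only [iidWeight, prod_mul_distrib, Fintype.prod_ite_mem]
    _ = ∏ j, ∑ x, μ x * (if j ∈ s then A j x else 1) :=
        (Fintype.prod_sum fun j x => μ x * if j ∈ s then A j x else 1).symm
    _ = ∏ j, if j ∈ s then ∑ x, μ x * A j x else 1 := by
        refine prod_congr rfl fun j _ => ?_
        split_ifs <;> simp [hμ]
    _ = ∏ j ∈ s, ∑ x, μ x * A j x := Fintype.prod_ite_mem s _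

lemma sum_iidWeight {μ : α → ℝ} (hμ : ∑ x, μ x = 1) : ∑ C : I → α, iidWeight μ C = 1 := by
  simpa using sum_iidWeight_mul_prod hμ (∅ : Finset I) fun _ _ => 1

lemma sum_iidWeight_mul_apply {μ : α → ℝ} (hμ : ∑ x, μ x = 1) (i : I) (A : α → ℝ) :
    ∑ C : I → α, iidWeight μ C * A (C i) = ∑ x, μ x * A x := by
  simpa using sum_iidWeight_mul_prod hμ {i} fun _ => A

lemma sum_iidWeight_mul_apply_mul_apply {μ : α → ℝ} (hμ : ∑ x, μ x = 1) {i i' : I}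
    (h : i ≠ i') (A B : α → ℝ) :
    ∑ C : I → α, iidWeight μ C * (A (C i) * B (C i')) = (∑ x, μ x * A x) * ∑ x, μ x * B x := by
  simpa [prod_pair h, h.symm] using
    sum_iidWeight_mul_prod hμ {i, i'} fun j => if j = i then A else B

lemma sum_filter_le_le_sum_mul_div {μ g : α → ℝ} (hμ : ∀ x, 0 ≤ μ x) (hg : ∀ x, 0 ≤ g x) {T : ℝ}
    (hT : 0 < T) : ∑ x ∈ univ.filter (fun x => T ≤ g x), μ x ≤ (∑ x, μ x * g x) / T := by
  rw [le_div_iff₀ hT, sum_mul]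
  calc ∑ x ∈ univ.filter (fun x => T ≤ g x), μ x * T
      ≤ ∑ x ∈ univ.filter (fun x => T ≤ g x), μ x * g x :=
        sum_le_sum fun x hx => mul_le_mul_of_nonneg_left (mem_filter.1 hx).2 (hμ x)
    _ ≤ ∑ x, μ x * g x :=
        sum_le_sum_of_subset_of_nonneg (filter_subset _ _) fun x _ _ => mul_nonneg (hμ x) (hg x)

variable [Fintype β]

lemma sum_filter_decodingError_le {W : β → ℝ} (hW : ∀ y, 0 ≤ W y) (score : I → β → ℝ)
    (i₀ : I) (T : ℝ) :
    ∑ y ∈ univ.filter (fun y => ¬ ∀ p, p ≠ i₀ → score p y < score i₀ y), W y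
      ≤ ∑ y ∈ univ.filter (fun y => score i₀ y < T), W y
        + ∑ p ∈ univ.erase i₀, ∑ y ∈ univ.filter (fun y => T ≤ score p y), W y := by
  have hsub : univ.filter (fun y => ¬ ∀ p, p ≠ i₀ → score p y < score i₀ y)
      ⊆ univ.filter (fun y => score i₀ y < T)
        ∪ (univ.erase i₀).biUnion fun p => univ.filter (fun y => T ≤ score p y) := by
    intro y hy
    simp only [mem_filter, mem_univ, true_and, not_forall, not_lt, exists_prop] at hy
    obtain ⟨p, hp, hbeaten⟩ := hy
    by_cases hlow : score i₀ y < T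
    · exact mem_union_left _ (by simpa using hlow)
    · exact mem_union_right _ <| mem_biUnion.2
        ⟨p, mem_erase.2 ⟨hp, mem_univ p⟩, by simpa using (not_lt.1 hlow).trans hbeaten⟩
  calc _ ≤ _ := sum_le_sum_of_subset_of_nonneg hsub fun y _ _ => hW y
    _ ≤ _ := (sum_union_le_of_nonneg hW _ _).trans
        (by gcongr; exact sum_biUnion_le_of_nonneg hW _ _)

variable {μ : α → ℝ} (hμ0 : ∀ x, 0 ≤ μ x) (hμ1 : ∑ x, μ x = 1)
  {d : α → β → ℝ} (hd0 : ∀ x y, 0 ≤ d x y) (hdE : ∀ y, ∑ x, μ x * d x y ≤ 1)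
  {Wn : α → β → ℝ} (hWn0 : ∀ x y, 0 ≤ Wn x y) (hWn1 : ∀ x, ∑ y, Wn x y = 1)
include hμ0 hμ1 hd0 hdE hWn0 hWn1

lemma sum_iidWeight_mul_sum_filter_le_one_div {i₀ p : I} (hp : p ≠ i₀) {T : ℝ} (hT : 0 < T) :
    ∑ C : I → α, iidWeight μ C * ∑ y ∈ univ.filter (fun y => T ≤ d (C p) y), Wn (C i₀) y
      ≤ 1 / T := by
  calc ∑ C : I → α, iidWeight μ C * ∑ y ∈ univ.filter (fun y => T ≤ d (C p) y), Wn (C i₀) y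
      = ∑ y, ∑ C : I → α, iidWeight μ C * (Wn (C i₀) y * if T ≤ d (C p) y then 1 else 0) := by
        simp only [sum_filter, mul_boole, mul_sum]
        exact sum_comm
    _ = ∑ y, (∑ x, μ x * Wn x y) * ∑ x ∈ univ.filter (fun x => T ≤ d x y), μ x := by
        refine sum_congr rfl fun y _ => ?_
        refine (sum_iidWeight_mul_apply_mul_apply hμ1 hp.symm (Wn · y)
          fun x => if T ≤ d x y then 1 else 0).trans ?_
        simp only [sum_filter, mul_boole]
    _ ≤ ∑ y, (∑ x, μ x * Wn x y) * (1 / T) := by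
        gcongr with y
        · exact sum_nonneg fun x _ => mul_nonneg (hμ0 x) (hWn0 x y)
        · exact (sum_filter_le_le_sum_mul_div hμ0 (hd0 · y) hT).trans
            (div_le_div_of_nonneg_right (hdE y) hT.le)
    _ = 1 / T := by
        rw [← sum_mul, sum_comm]
        simp [← mul_sum, hWn1, hμ1]

theorem sum_iidWeight_mul_sum_filter_decodingError_le {η : ℝ} (hη : 0 < η) (i₀ : I) :
    ∑ C : I → α, iidWeight μ C *
        ∑ y ∈ univ.filter (fun y => ¬ ∀ p, p ≠ i₀ → d (C p) y < d (C i₀) y), Wn (C i₀) y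
      ≤ ∑ x, μ x * ∑ y ∈ univ.filter (fun y => d x y < Fintype.card I / η), Wn x y + η := by
  set T : ℝ := Fintype.card I / η
  have hI : 0 < (Fintype.card I : ℝ) := Nat.cast_pos.2 (Fintype.card_pos_iff.2 ⟨i₀⟩)
  have hT : 0 < T := div_pos hI hη
  calc _ ≤ ∑ C : I → α, iidWeight μ C *
          (∑ y ∈ univ.filter (fun y => d (C i₀) y < T), Wn (C i₀) y
            + ∑ p ∈ univ.erase i₀, ∑ y ∈ univ.filter (fun y => T ≤ d (C p) y), Wn (C i₀) y) := by
        gcongr with C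
        · exact iidWeight_nonneg hμ0 C
        · exact sum_filter_decodingError_le (hWn0 (C i₀)) (fun p => d (C p)) i₀ T
    _ = ∑ x, μ x * ∑ y ∈ univ.filter (fun y => d x y < T), Wn x y
          + ∑ p ∈ univ.erase i₀, ∑ C : I → α, iidWeight μ C *
              ∑ y ∈ univ.filter (fun y => T ≤ d (C p) y), Wn (C i₀) y := by
        rw [← sum_iidWeight_mul_apply hμ1 i₀, sum_comm, ← sum_add_distrib]
        simp only [mul_add, mul_sum]
    _ ≤ ∑ x, μ x * ∑ y ∈ univ.filter (fun y => d x y < T), Wn x y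
          + ∑ p ∈ univ.erase i₀, 1 / T := by
        gcongr with p hp
        exact sum_iidWeight_mul_sum_filter_le_one_div hμ0 hμ1 hd0 hdE hWn0 hWn1
          (ne_of_mem_erase hp) hT
    _ ≤ _ := by
        gcongr
        calc ∑ p ∈ univ.erase i₀, 1 / T ≤ ∑ _p : I, 1 / T :=
              sum_le_sum_of_subset_of_nonneg (erase_subset _ _) fun _ _ _ => by positivity
          _ = η := by simp [T, field]

end RandomCoding

open RandomCoding in
/-- Random-coding decoding error bound: for i.i.d. codewords decoded by the maximum-`d`
rule, if `E_{Q_X^n} d(X,y) ≤ 1` for all `y`, then for every channel `W_n`, every `η > 0`, and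
every message pair `(m,w)`, the expected error probability is at most
`P(d(X,Y) < |M||W|/η) + η`. -/
theorem random_coding_error_bound (X Y : Type) [Fintype X] [Fintype Y] (n : ℕ)
    (M W : Type) [Fintype M] [Fintype W]
    (QX : X → ℝ) (hQX0 : ∀ x, 0 ≤ QX x) (hQX1 : ∑ x, QX x = 1)
    (d : (Fin n → X) → (Fin n → Y) → ℝ) (hd0 : ∀ x y, 0 ≤ d x y)
    (hdE : ∀ y : Fin n → Y, ∑ x : Fin n → X, (∏ i, QX (x i)) * d x y ≤ 1)
    (Wn : (Fin n → X) → (Fin n → Y) → ℝ)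
    (hWn0 : ∀ x y, 0 ≤ Wn x y) (hWn1 : ∀ x, ∑ y, Wn x y = 1)
    (η : ℝ) (hη : 0 < η) (m : M) (w : W) :
    ∑ C : M × W → Fin n → X,
        (∏ p : M × W, ∏ i, QX (C p i)) *
          ∑ y ∈ Finset.univ.filter (fun y : Fin n → Y =>
              ¬ ∀ p : M × W, p ≠ (m, w) → d (C p) y < d (C (m, w)) y),
            Wn (C (m, w)) y
      ≤ (∑ x : Fin n → X, (∏ i, QX (x i)) *
          ∑ y ∈ Finset.univ.filter
              (fun y => d x y < (Fintype.card M * Fintype.card W : ℝ) / η),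
            Wn x y) + η := by
  have h := sum_iidWeight_mul_sum_filter_decodingError_le (iidWeight_nonneg hQX0)
    (sum_iidWeight (I := Fin n) hQX1) hd0 hdE hWn0 hWn1 hη (m, w)
  rwa [Fintype.card_prod, Nat.cast_mul] at h
end

section
/- Minimax channel inequality (Kuhn–Tucker-type condition): let 𝔚_Q = {W_Q : Q ∈ 𝒬} be a convex set of channels X → P(Y) where W_Q(y|x) = Σ_s Q(s) W_s(y|x) and 𝒬 ⊆ P(S) is convex. Let Q̃ ∈ 𝒬 minimize I(Q_X, W_{Q̃}) over 𝒬 for a fixed input distribution Q_X. Then for every Q ∈ 𝒬, Σ_{x,y} Q_X(x) W_Q(y|x) log( W_{Q̃}(y|x) / Q̃_Y(y) ) ≥ I(Q_X, W_{Q̃}), where Q̃_Y(y) = Σ_x Q_X(x) W_{Q̃}(y|x). -/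
/-!
Restricted to the segment `Q̃ + α (Q - Q̃) ⊆ 𝒬`, the mutual information
`α ↦ I(Q_X, W_{Q̃} + α (W_Q - W_{Q̃}))` is minimal at `α = 0`, so its right derivative there is
nonnegative. Differentiating `W log (W / W_Y)`, the contribution of the output distribution `W_Y`
cancels after summing over `x`, so this derivative is
`Σ Q_X (W_Q - W_{Q̃}) log (W_{Q̃} / Q̃_Y)`, which is the difference of the two sides.
-/

open Finset Filter Topology Real

theorem HasDerivWithinAt.nonneg_of_eventually_le {g : ℝ → ℝ} {g' a : ℝ}
    (hg : HasDerivWithinAt g g' (Set.Ioi a) a) (hmin : ∀ᶠ t in 𝓝[>] a, g a ≤ g t) :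
    0 ≤ g' := by
  refine ge_of_tendsto ((hasDerivWithinAt_iff_tendsto_slope' Set.self_notMem_Ioi).1 hg) ?_
  filter_upwards [hmin, self_mem_nhdsWithin] with t hgt (ht : a < t)
  rw [slope_def_field]
  exact div_nonneg (sub_nonneg.2 hgt) (sub_nonneg.2 ht.le)

theorem HasDerivAt.mul_logb_div {u v : ℝ → ℝ} {u' v' t : ℝ} (hu : HasDerivAt u u' t)
    (hv : HasDerivAt v v' t) (hu0 : u t ≠ 0) (hv0 : v t ≠ 0) (b : ℝ) :
    HasDerivAt (fun t => u t * logb b (u t / v t))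
      (u' * logb b (u t / v t) + (u' - u t * v' / v t) / Real.log b) t := by
  have hlog := ((hu.fun_div hv hv0).log (div_ne_zero hu0 hv0)).div_const (Real.log b)
  refine (hu.fun_mul hlog).congr_deriv ?_
  rw [logb]
  field_simp

theorem sum_mul_pos_of_nonneg_of_sum_eq_one {ι : Type*} [Fintype ι] {p f : ι → ℝ}
    (hp0 : ∀ i, 0 ≤ p i) (hp1 : ∑ i, p i = 1) (hf : ∀ i, 0 < f i) : 0 < ∑ i, p i * f i := by
  obtain ⟨i, hi⟩ : ∃ i, 0 < p i := by
    by_contra! h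
    linarith [sum_nonpos fun i (_ : i ∈ univ) => h i]
  exact sum_pos' (fun j _ => mul_nonneg (hp0 j) (hf j).le) ⟨i, mem_univ i, mul_pos hi (hf i)⟩

section Channel

variable {X Y S : Type*}

def channelMix [Fintype S] (W : S → X → Y → ℝ) (Q : S → ℝ) : X → Y → ℝ :=
  fun x y => ∑ s, Q s * W s x y

noncomputable def outputDist [Fintype X] (QX : X → ℝ) (A : X → Y → ℝ) : Y → ℝ :=
  fun y => ∑ x, QX x * A x y

noncomputable def crossInfo [Fintype X] [Fintype Y] (QX : X → ℝ) (B A : X → Y → ℝ) : ℝ :=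
  ∑ x, ∑ y, QX x * B x y * logb 2 (A x y / outputDist QX A y)

noncomputable def mutualInfo [Fintype X] [Fintype Y] (QX : X → ℝ) (A : X → Y → ℝ) : ℝ :=
  crossInfo QX A A

theorem channelMix_add_smul [Fintype S] (W : S → X → Y → ℝ) (Q Q' : S → ℝ) (α : ℝ) :
    channelMix W (Q + α • Q') = channelMix W Q + α • channelMix W Q' := by
  ext x y
  simp only [channelMix, Pi.add_apply, Pi.smul_apply, smul_eq_mul, add_mul, sum_add_distrib,
    mul_sum, mul_assoc]

theorem channelMix_sub [Fintype S] (W : S → X → Y → ℝ) (Q Q' : S → ℝ) :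
    channelMix W (Q - Q') = channelMix W Q - channelMix W Q' := by
  ext x y
  simp only [channelMix, Pi.sub_apply, sub_mul, sum_sub_distrib]

theorem crossInfo_sub_left [Fintype X] [Fintype Y] (QX : X → ℝ) (B B' A : X → Y → ℝ) :
    crossInfo QX (B - B') A = crossInfo QX B A - crossInfo QX B' A := by
  simp only [crossInfo, Pi.sub_apply, mul_sub, sub_mul, sum_sub_distrib]

theorem outputDist_add_smul [Fintype X] (QX : X → ℝ) (A B : X → Y → ℝ) (α : ℝ) (y : Y) :
    outputDist QX (A + α • B) y = outputDist QX A y + α * outputDist QX B y := by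
  simp only [outputDist, Pi.add_apply, Pi.smul_apply, smul_eq_mul, mul_add, sum_add_distrib,
    mul_sum, mul_left_comm]

theorem sum_sum_sub_mul_outputDist_div [Fintype X] [Fintype Y] (QX : X → ℝ) (A B : X → Y → ℝ)
    (ha : ∀ y, outputDist QX A y ≠ 0) :
    ∑ x, ∑ y, QX x * (B x y - A x y * outputDist QX B y / outputDist QX A y) = 0 := by
  rw [sum_comm]
  refine sum_eq_zero fun y _ => ?_
  have hsplit : ∑ x, QX x * (B x y - A x y * outputDist QX B y / outputDist QX A y)
      = outputDist QX B y - outputDist QX A y * (outputDist QX B y / outputDist QX A y) := by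
    simp only [outputDist, mul_sub, sum_sub_distrib, sum_mul, mul_div_assoc, mul_assoc]
  rw [hsplit, mul_div_cancel₀ _ (ha y), sub_self]

theorem hasDerivAt_mutualInfo_add_smul [Fintype X] [Fintype Y] (QX : X → ℝ) (A B : X → Y → ℝ)
    (hA : ∀ x y, A x y ≠ 0) (ha : ∀ y, outputDist QX A y ≠ 0) :
    HasDerivAt (fun α : ℝ => mutualInfo QX (A + α • B)) (crossInfo QX B A) 0 := by
  -- the terms coming from differentiating the output distribution sum to zero
  have hzero := sum_sum_sub_mul_outputDist_div QX A B ha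
  set a := outputDist QX A
  set b := outputDist QX B
  have hline : ∀ c d : ℝ, HasDerivAt (fun α : ℝ => c + α * d) d 0 := fun c d => by
    simpa using ((hasDerivAt_id (0 : ℝ)).mul_const d).const_add c
  have hterm : ∀ x y, HasDerivAt
      (fun α : ℝ => QX x * ((A x y + α * B x y) * logb 2 ((A x y + α * B x y) / (a y + α * b y))))
      (QX x * (B x y * logb 2 (A x y / a y) + (B x y - A x y * b y / a y) / Real.log 2)) 0 :=
    fun x y => by
      simpa using ((hline (A x y) (B x y)).mul_logb_div (hline (a y) (b y))
        (by simpa using hA x y) (by simpa using ha y) 2).const_mul (QX x)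
  have hsum := HasDerivAt.fun_sum fun x (_ : x ∈ univ) =>
    HasDerivAt.fun_sum fun y (_ : y ∈ univ) => hterm x y
  have hfun : (fun α : ℝ => mutualInfo QX (A + α • B)) = fun α : ℝ => ∑ x, ∑ y,
      QX x * ((A x y + α * B x y) * logb 2 ((A x y + α * B x y) / (a y + α * b y))) := by
    ext α
    simp only [mutualInfo, crossInfo, outputDist_add_smul, Pi.add_apply, Pi.smul_apply,
      smul_eq_mul, mul_assoc]
    rfl
  rw [hfun]
  refine hsum.congr_deriv ?_
  simp only [mul_add, sum_add_distrib, mul_div_assoc', ← sum_div, hzero, zero_div, add_zero,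
    crossInfo, mul_assoc]
  rfl

end Channel

theorem minimax_channel_inequality_general (X Y S : Type) [Fintype X] [Fintype Y] [Fintype S]
    (W : S → X → Y → ℝ) (hW0 : ∀ s x y, 0 < W s x y)
    (𝒬 : Set (S → ℝ)) (h𝒬 : Convex ℝ 𝒬)
    (hpmf : ∀ Q ∈ 𝒬, (∀ s, 0 ≤ Q s) ∧ ∑ s, Q s = 1)
    (QX : X → ℝ) (hQX0 : ∀ x, 0 ≤ QX x) (hQX1 : ∑ x, QX x = 1)
    (Qt : S → ℝ) (hQt : Qt ∈ 𝒬)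
    (hmin : ∀ Q ∈ 𝒬,
      (∑ x, ∑ y, QX x * (∑ s, Qt s * W s x y) *
          Real.logb 2 ((∑ s, Qt s * W s x y) / (∑ x', QX x' * (∑ s, Qt s * W s x' y))))
        ≤ ∑ x, ∑ y, QX x * (∑ s, Q s * W s x y) *
            Real.logb 2 ((∑ s, Q s * W s x y) / (∑ x', QX x' * (∑ s, Q s * W s x' y)))) :
    ∀ Q ∈ 𝒬,
      (∑ x, ∑ y, QX x * (∑ s, Q s * W s x y) *
          Real.logb 2 ((∑ s, Qt s * W s x y) / (∑ x', QX x' * (∑ s, Qt s * W s x' y))))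
        ≥ ∑ x, ∑ y, QX x * (∑ s, Qt s * W s x y) *
            Real.logb 2 ((∑ s, Qt s * W s x y) / (∑ x', QX x' * (∑ s, Qt s * W s x' y))) := by
  intro Q hQ
  change crossInfo QX (channelMix W Q) (channelMix W Qt) ≥ mutualInfo QX (channelMix W Qt)
  obtain ⟨hQt0, hQt1⟩ := hpmf Qt hQt
  have hA : ∀ x y, 0 < channelMix W Qt x y :=
    fun x y => sum_mul_pos_of_nonneg_of_sum_eq_one hQt0 hQt1 (hW0 · x y)
  have ha : ∀ y, 0 < outputDist QX (channelMix W Qt) y :=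
    fun y => sum_mul_pos_of_nonneg_of_sum_eq_one hQX0 hQX1 (hA · y)
  have hderiv := hasDerivAt_mutualInfo_add_smul QX (channelMix W Qt) (channelMix W (Q - Qt))
    (fun x y => (hA x y).ne') (fun y => (ha y).ne')
  have hsegment : ∀ᶠ α in 𝓝[>] (0 : ℝ), mutualInfo QX (channelMix W Qt)
      ≤ mutualInfo QX (channelMix W Qt + α • channelMix W (Q - Qt)) := by
    filter_upwards [Ioo_mem_nhdsGT one_pos] with α hα
    rw [← channelMix_add_smul]
    exact hmin _ (h𝒬.add_smul_sub_mem hQt hQ ⟨hα.1.le, hα.2.le⟩)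
  have hderiv_nonneg := hderiv.hasDerivWithinAt.nonneg_of_eventually_le (by simpa using hsegment)
  rw [channelMix_sub, crossInfo_sub_left] at hderiv_nonneg
  exact sub_nonneg.1 hderiv_nonneg

/-- Minimax channel inequality (Kuhn–Tucker-type condition): if `Q̃ ∈ 𝒬` minimizes
`I(Q_X, W_Q)` over a convex set `𝒬` of state distributions, then for every `Q ∈ 𝒬`,
`Σ_{x,y} Q_X(x) W_Q(y|x) log(W_{Q̃}(y|x)/Q̃_Y(y)) ≥ I(Q_X, W_{Q̃})`. -/
theorem minimax_channel_inequality (X Y S : Type) [Fintype X] [Fintype Y] [Fintype S]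
    (W : S → X → Y → ℝ) (hW0 : ∀ s x y, 0 < W s x y) (hW1 : ∀ s x, ∑ y, W s x y = 1)
    (𝒬 : Set (S → ℝ)) (h𝒬 : Convex ℝ 𝒬)
    (hpmf : ∀ Q ∈ 𝒬, (∀ s, 0 ≤ Q s) ∧ ∑ s, Q s = 1)
    (QX : X → ℝ) (hQX0 : ∀ x, 0 ≤ QX x) (hQX1 : ∑ x, QX x = 1)
    (Qt : S → ℝ) (hQt : Qt ∈ 𝒬)
    (hmin : ∀ Q ∈ 𝒬,
      (∑ x, ∑ y, QX x * (∑ s, Qt s * W s x y) *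
          Real.logb 2 ((∑ s, Qt s * W s x y) / (∑ x', QX x' * (∑ s, Qt s * W s x' y))))
        ≤ ∑ x, ∑ y, QX x * (∑ s, Q s * W s x y) *
            Real.logb 2 ((∑ s, Q s * W s x y) / (∑ x', QX x' * (∑ s, Q s * W s x' y)))) :
    ∀ Q ∈ 𝒬,
      (∑ x, ∑ y, QX x * (∑ s, Q s * W s x y) *
          Real.logb 2 ((∑ s, Qt s * W s x y) / (∑ x', QX x' * (∑ s, Qt s * W s x' y))))
        ≥ ∑ x, ∑ y, QX x * (∑ s, Qt s * W s x y) *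
            Real.logb 2 ((∑ s, Qt s * W s x y) / (∑ x', QX x' * (∑ s, Qt s * W s x' y))) :=
  minimax_channel_inequality_general X Y S W hW0 𝒬 h𝒬 hpmf QX hQX0 hQX1 Qt hQt hmin
end
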